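/- arXiv:1605.02600 — 2 statements merged into one kernel-verified Lean document; each statement's English description precedes it below -/
import Mathlib

section
/- Let A be an associative ring with elements a, b, P satisfying [b,a] = 1, P² = P, b·P = 0, P·a = 0. Define E(m,n) := (1/√(m! n!)) · aᵐ · P · bⁿ (coefficients in ℝ or ℂ). Then E(m,n) · E(k,l) = δ_{n,k} · E(m,l) for all natural numbers m, n, k, l. -/
/-!
Repeatedly moving `b` to the right through `a`, with `b aᵏ⁺¹ = aᵏ⁺¹ b + (k + 1) aᵏ`, and using
`b P = 0`, `P a = 0`, one finds `P bⁿ aᵏ P = δₙₖ n! P`. Hence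
`(aᵐ P bⁿ)(aᵏ P bˡ) = δₙₖ n! aᵐ P bˡ`, and the factor `n!` is exactly absorbed by the
normalisations: `n! / (√(m! n!) √(n! l!)) = 1 / √(m! l!)`.
-/

section CanonicalCommutation

variable {A : Type*} [Ring A] {a b : A}

theorem mul_pow_succ_of_sub_eq_one (h : b * a - a * b = 1) (k : ℕ) :
    b * a ^ (k + 1) = a ^ (k + 1) * b + (k + 1) • a ^ k := by
  have hba : b * a = a * b + 1 := sub_eq_iff_eq_add'.mp h
  induction k with
  | zero => simpa using hba
  | succ j ih =>
    calc b * a ^ (j + 2) = (b * a ^ (j + 1)) * a := by rw [pow_succ _ (j + 1), mul_assoc]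
      _ = a ^ (j + 1) * (b * a) + (j + 1) • a ^ (j + 1) := by
        rw [ih, add_mul, smul_mul_assoc, ← pow_succ, mul_assoc]
      _ = a ^ (j + 2) * b + (j + 2) • a ^ (j + 1) := by
        rw [hba, mul_add, mul_one, ← mul_assoc, ← pow_succ, succ_nsmul _ (j + 1)]
        abel

variable {P : A}

theorem vacuum_mul_pow_mul_pow_mul_vacuum (h : b * a - a * b = 1) (hP : P * P = P)
    (hbP : b * P = 0) (hPa : P * a = 0) (n k : ℕ) :
    P * b ^ n * a ^ k * P = if n = k then n.factorial • P else 0 := by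
  induction n generalizing k with
  | zero =>
    cases k with
    | zero => simpa using hP
    | succ j => simp [pow_succ', ← mul_assoc, hPa]
  | succ n ih =>
    cases k with
    | zero => simp [pow_succ, mul_assoc, hbP]
    | succ j =>
      have expand : P * b ^ (n + 1) * a ^ (j + 1) * P
          = P * b ^ n * a ^ (j + 1) * (b * P) + (j + 1) • (P * b ^ n * a ^ j * P) := by
        rw [show P * b ^ (n + 1) * a ^ (j + 1) * P = P * b ^ n * (b * a ^ (j + 1)) * P by
          simp only [pow_succ, mul_assoc], mul_pow_succ_of_sub_eq_one h]
        simp only [mul_add, add_mul, mul_smul_comm, smul_mul_assoc, mul_assoc]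
      rw [expand, hbP, mul_zero, zero_add, ih j]
      by_cases hnj : n = j
      · subst hnj
        simp [Nat.factorial_succ, mul_assoc]
      · simp [hnj]

end CanonicalCommutation

theorem inv_sqrt_mul_inv_sqrt_mul {x y z : ℝ} (hx : 0 ≤ x) (hy : 0 < y) :
    (√(x * y))⁻¹ * (√(y * z))⁻¹ * y = (√(x * z))⁻¹ := by
  have hsy : √y ≠ 0 := (Real.sqrt_pos.mpr hy).ne'
  rw [Real.sqrt_mul hx, Real.sqrt_mul hy.le, Real.sqrt_mul hx]
  field_simp
  rw [Real.sq_sqrt hy.le]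

/-- Matrix-unit multiplication law for the twisted Fock basis
`E(m,n) = (1/√(m! n!)) aᵐ P bⁿ`. -/
theorem twisted_fock_matrix_units {A : Type*} [Ring A] [Algebra ℂ A] (a b P : A)
    (h : b * a - a * b = 1) (hP : P * P = P) (hbP : b * P = 0) (hPa : P * a = 0)
    (E : ℕ → ℕ → A)
    (hE : ∀ m n, E m n =
      ((Real.sqrt (m.factorial * n.factorial) : ℂ))⁻¹ • (a ^ m * P * b ^ n))
    (m n k l : ℕ) :
    E m n * E k l = if n = k then E m l else 0 := by
  have hmid : (a ^ m * P * b ^ n) * (a ^ k * P * b ^ l)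
      = a ^ m * (P * b ^ n * a ^ k * P) * b ^ l := by
    simp only [mul_assoc]
  rw [hE, hE, hE, smul_mul_smul_comm, hmid, vacuum_mul_pow_mul_pow_mul_vacuum h hP hbP hPa]
  by_cases hnk : n = k
  · subst hnk
    have hcoeff := inv_sqrt_mul_inv_sqrt_mul (x := m.factorial) (y := n.factorial)
      (z := l.factorial) (by positivity) (by positivity)
    rw [if_pos rfl, if_pos rfl, mul_smul_comm, smul_mul_assoc, ← Nat.cast_smul_eq_nsmul ℂ,
      smul_smul]
    congr 1
    exact_mod_cast congrArg Complex.ofReal hcoeff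
  · simp [hnk]
end

section
/- Define on the polynomial ring ℂ[z, z̄] (polynomials in two commuting variables) the product f ⋆ g := Σ_{n=0}^∞ (ℏⁿ/n!) (∂_z̄ⁿ f)(∂_zⁿ g) (a finite sum for polynomials), where ℏ ∈ ℂ. Then ⋆ is associative: (f ⋆ g) ⋆ h = f ⋆ (g ⋆ h) for all polynomials f, g, h, with unit 1. -/
open MvPolynomial

/-- The Wick-type star product `f ⋆ g = Σₙ (ℏⁿ/n!) (∂_z̄ⁿ f)(∂_zⁿ g)` on `ℂ[z, z̄]`,
where the variable `0` is `z` and the variable `1` is `z̄`. -/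
noncomputable def wickStar (ℏ : ℂ) (f g : MvPolynomial (Fin 2) ℂ) :
    MvPolynomial (Fin 2) ℂ :=
  ∑ n ∈ Finset.range (f.totalDegree + 1),
    (ℏ ^ n / n.factorial) •
      ((fun p => pderiv (1 : Fin 2) p)^[n] f * (fun p => pderiv (0 : Fin 2) p)^[n] g)

/-!
Say that `f` is left-associative if `(f ⋆ g) ⋆ h = f ⋆ (g ⋆ h)` for all `g, h`. Left-associative
polynomials are closed under sums and under `⋆`. Since `⋆` with a holomorphic left factor or an
antiholomorphic right factor is the ordinary product, `z · p = z ⋆ p` and `p · z̄ = p ⋆ z̄`, so it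
suffices to treat holomorphic polynomials and `z̄`. A holomorphic `p` satisfies
`(p g) ⋆ h = p (g ⋆ h)`. For `z̄` one has `z̄ ⋆ g = z̄ g + ℏ ∂_z g` and
`(z̄ g) ⋆ h = z̄ (g ⋆ h) + ℏ g ⋆ ∂_z h`, and the claim follows because `∂_z` is a derivation
of `⋆`.
-/

namespace Derivation

variable {R A : Type*} [CommSemiring R] [CommSemiring A] [Algebra R A] (D : Derivation R A A)

theorem iterate_mul_of_map_eq_zero {a : A} (ha : D a = 0) (b : A) (n : ℕ) :
    D^[n] (a * b) = a * D^[n] b := by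
  induction n with
  | zero => rfl
  | succ n ih =>
    rw [Function.iterate_succ_apply', Function.iterate_succ_apply', ih, leibniz, ha,
      smul_zero, add_zero, smul_eq_mul]

theorem iterate_succ_mul_of_map_eq_one {x : A} (hx : D x = 1) (b : A) (n : ℕ) :
    D^[n + 1] (x * b) = x * D^[n + 1] b + (n + 1) • D^[n] b := by
  induction n with
  | zero => simp [leibniz, hx]
  | succ n ih =>
    rw [Function.iterate_succ_apply' _ (n + 1), ih, map_add, map_nsmul, leibniz, hx,
      ← Function.iterate_succ_apply' D, ← Function.iterate_succ_apply' D, smul_eq_mul,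
      smul_eq_mul, mul_one, succ_nsmul _ (n + 1)]
    abel

end Derivation

namespace MvPolynomial

section Degree

variable {R σ : Type*} [CommSemiring R]

theorem totalDegree_pderiv_le (i : σ) (f : MvPolynomial σ R) :
    (pderiv i f).totalDegree ≤ f.totalDegree - 1 := by
  conv_lhs => rw [← sum_homogeneousComponent f, map_sum]
  refine totalDegree_finsetSum_le fun k hk => ?_
  have hk : k ≤ f.totalDegree := Nat.lt_succ_iff.mp (Finset.mem_range.mp hk)
  exact ((homogeneousComponent_isHomogeneous k f).pderiv).totalDegree_le.trans (by omega)

theorem totalDegree_iterate_pderiv_le (i : σ) (f : MvPolynomial σ R) (n : ℕ) :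
    ((pderiv i)^[n] f).totalDegree ≤ f.totalDegree - n := by
  induction n with
  | zero => rfl
  | succ n ih =>
    rw [Function.iterate_succ_apply']
    exact (totalDegree_pderiv_le i _).trans (by omega)

theorem iterate_pderiv_eq_zero_of_totalDegree_lt (i : σ) {f : MvPolynomial σ R} {n : ℕ}
    (h : f.totalDegree < n) : (pderiv i)^[n] f = 0 := by
  obtain ⟨m, rfl⟩ : ∃ m, n = m + 1 := Nat.exists_eq_add_one.mpr (by omega)
  have hm : ((pderiv i)^[m] f).totalDegree = 0 :=
    Nat.eq_zero_of_le_zero ((totalDegree_iterate_pderiv_le i f m).trans (by omega))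
  rw [Function.iterate_succ_apply', totalDegree_eq_zero_iff_eq_C.mp hm, pderiv_C]

end Degree

theorem pderiv_comm {R σ : Type*} [CommRing R] (i j : σ) (f : MvPolynomial σ R) :
    pderiv i (pderiv j f) = pderiv j (pderiv i f) := by
  classical
  have hcomm : ⁅pderiv i, pderiv j⁆ = (0 : Derivation R (MvPolynomial σ R) _) :=
    derivation_ext fun k => by
      rw [Derivation.commutator_apply]
      simp [pderiv_X, Pi.single_apply, apply_ite]
  have h := congr($hcomm f)
  rwa [Derivation.commutator_apply, Derivation.zero_apply, sub_eq_zero] at h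

end MvPolynomial

namespace WickStar

open Finset

variable (ℏ : ℂ)

theorem wickStar_eq_sum_range {f : MvPolynomial (Fin 2) ℂ} (g : MvPolynomial (Fin 2) ℂ) {N : ℕ}
    (hN : f.totalDegree < N) :
    wickStar ℏ f g =
      ∑ n ∈ range N, (ℏ ^ n / n.factorial) • ((pderiv 1)^[n] f * (pderiv 0)^[n] g) := by
  refine sum_subset (range_subset_range.mpr hN) fun n _ hn => ?_
  rw [mem_range, not_lt] at hn
  rw [iterate_pderiv_eq_zero_of_totalDegree_lt 1 (by omega), zero_mul, smul_zero]

theorem wickStar_add_left (f₁ f₂ g : MvPolynomial (Fin 2) ℂ) :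
    wickStar ℏ (f₁ + f₂) g = wickStar ℏ f₁ g + wickStar ℏ f₂ g := by
  set N := f₁.totalDegree + f₂.totalDegree + 1
  have hN := totalDegree_add f₁ f₂
  rw [wickStar_eq_sum_range ℏ g (N := N) (by omega), wickStar_eq_sum_range ℏ g (N := N) (by omega),
    wickStar_eq_sum_range ℏ g (N := N) (by omega), ← sum_add_distrib]
  simp only [iterate_map_add, add_mul, smul_add]

theorem wickStar_smul_left (c : ℂ) (f g : MvPolynomial (Fin 2) ℂ) :
    wickStar ℏ (c • f) g = c • wickStar ℏ f g := by
  rw [wickStar_eq_sum_range ℏ g (N := f.totalDegree + 1)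
      ((totalDegree_smul_le c f).trans_lt (Nat.lt_succ_self _)),
    wickStar_eq_sum_range ℏ g (Nat.lt_succ_self _), smul_sum]
  have hc (n : ℕ) : (pderiv 1)^[n] (c • f) = c • (pderiv 1)^[n] f :=
    Function.Commute.iterate_left (fun x => (pderiv 1).map_smul c x) n f
  simp only [hc, smul_mul_assoc, smul_comm c]

theorem one_wickStar (g : MvPolynomial (Fin 2) ℂ) : wickStar ℏ 1 g = g := by
  simp [wickStar]

theorem wickStar_of_pderiv_zero_eq_zero (f : MvPolynomial (Fin 2) ℂ) {q : MvPolynomial (Fin 2) ℂ}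
    (hq : pderiv 0 q = 0) : wickStar ℏ f q = f * q := by
  rw [wickStar_eq_sum_range ℏ q (Nat.lt_succ_self _), sum_range_succ']
  simp [Function.iterate_succ_apply, hq]

theorem wickStar_one (f : MvPolynomial (Fin 2) ℂ) : wickStar ℏ f 1 = f := by
  rw [wickStar_of_pderiv_zero_eq_zero ℏ f pderiv_one, mul_one]

theorem mul_wickStar_of_pderiv_one_eq_zero {p : MvPolynomial (Fin 2) ℂ} (hp : pderiv 1 p = 0)
    (g h : MvPolynomial (Fin 2) ℂ) : wickStar ℏ (p * g) h = p * wickStar ℏ g h := by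
  set N := p.totalDegree + g.totalDegree + 1
  have hN := totalDegree_mul p g
  rw [wickStar_eq_sum_range ℏ h (N := N) (by omega), wickStar_eq_sum_range ℏ h (N := N) (by omega),
    mul_sum]
  simp only [(pderiv 1).iterate_mul_of_map_eq_zero hp, mul_assoc, mul_smul_comm]

theorem wickStar_of_pderiv_one_eq_zero {p : MvPolynomial (Fin 2) ℂ} (hp : pderiv 1 p = 0)
    (g : MvPolynomial (Fin 2) ℂ) : wickStar ℏ p g = p * g := by
  rw [← mul_one p, mul_wickStar_of_pderiv_one_eq_zero ℏ hp, one_wickStar, mul_one]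

theorem pderiv_zero_wickStar (f g : MvPolynomial (Fin 2) ℂ) :
    pderiv 0 (wickStar ℏ f g) = wickStar ℏ (pderiv 0 f) g + wickStar ℏ f (pderiv 0 g) := by
  have hf : (pderiv 0 f).totalDegree < f.totalDegree + 1 :=
    (totalDegree_pderiv_le 0 f).trans_lt (by omega)
  have hcomm (n : ℕ) : pderiv 0 ((pderiv 1)^[n] f) = (pderiv 1)^[n] (pderiv 0 f) :=
    Function.Commute.iterate_right (pderiv_comm 0 1) n f
  rw [wickStar_eq_sum_range ℏ g (Nat.lt_succ_self _), wickStar_eq_sum_range ℏ g hf,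
    wickStar_eq_sum_range ℏ _ (Nat.lt_succ_self _), map_sum, ← sum_add_distrib]
  refine sum_congr rfl fun n _ => ?_
  rw [(pderiv 0).map_smul, pderiv_mul, hcomm, ← Function.iterate_succ_apply' (pderiv 0),
    Function.iterate_succ_apply, smul_add]

theorem X_one_mul_wickStar (g h : MvPolynomial (Fin 2) ℂ) :
    wickStar ℏ (X 1 * g) h = X 1 * wickStar ℏ g h + ℏ • wickStar ℏ g (pderiv 0 h) := by
  set N := g.totalDegree + 1
  have hN : (X 1 * g).totalDegree < N + 1 := by
    have := totalDegree_mul (X 1) g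
    rw [totalDegree_X] at this
    omega
  have hX : pderiv 1 (X 1 : MvPolynomial (Fin 2) ℂ) = 1 := pderiv_X_self 1
  have hscalar (n : ℕ) :
      ℏ ^ (n + 1) / (n + 1).factorial * (n + 1) = ℏ * (ℏ ^ n / n.factorial) := by
    rw [Nat.factorial_succ, Nat.cast_mul, Nat.cast_add_one, pow_succ']
    field_simp
  rw [wickStar_eq_sum_range ℏ h hN, wickStar_eq_sum_range ℏ h (N := N + 1) (by omega),
    wickStar_eq_sum_range ℏ (pderiv 0 h) (N := N) (by omega), sum_range_succ',
    sum_range_succ' _ N, mul_add, mul_sum, smul_sum, add_right_comm, ← sum_add_distrib]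
  congr 1
  · refine sum_congr rfl fun n _ => ?_
    rw [(pderiv 1).iterate_succ_mul_of_map_eq_one hX, add_mul, smul_add, mul_assoc,
      mul_smul_comm, smul_mul_assoc, ← Nat.cast_smul_eq_nsmul ℂ, smul_smul,
      Nat.cast_add_one, hscalar, mul_smul, Function.iterate_succ_apply _ n h]
  · simp [mul_assoc]

def LeftAssoc (f : MvPolynomial (Fin 2) ℂ) : Prop :=
  ∀ g h, wickStar ℏ (wickStar ℏ f g) h = wickStar ℏ f (wickStar ℏ g h)

variable {ℏ}

theorem LeftAssoc.add {f₁ f₂ : MvPolynomial (Fin 2) ℂ} (h₁ : LeftAssoc ℏ f₁)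
    (h₂ : LeftAssoc ℏ f₂) : LeftAssoc ℏ (f₁ + f₂) := fun g h => by
  simp only [wickStar_add_left, h₁ g h, h₂ g h]

theorem LeftAssoc.wickStar {f₁ f₂ : MvPolynomial (Fin 2) ℂ} (h₁ : LeftAssoc ℏ f₁)
    (h₂ : LeftAssoc ℏ f₂) : LeftAssoc ℏ (wickStar ℏ f₁ f₂) := fun g h => by
  rw [h₁, h₁, h₂, h₁]

theorem leftAssoc_of_pderiv_one_eq_zero {p : MvPolynomial (Fin 2) ℂ} (hp : pderiv 1 p = 0) :
    LeftAssoc ℏ p := fun g h => by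
  rw [wickStar_of_pderiv_one_eq_zero ℏ hp, mul_wickStar_of_pderiv_one_eq_zero ℏ hp,
    wickStar_of_pderiv_one_eq_zero ℏ hp]

theorem leftAssoc_X_one : LeftAssoc ℏ (X 1) := fun g h => by
  have hX (g : MvPolynomial (Fin 2) ℂ) : wickStar ℏ (X 1) g = X 1 * g + ℏ • pderiv 0 g := by
    simpa [one_wickStar] using X_one_mul_wickStar ℏ 1 g
  rw [hX, hX, wickStar_add_left, wickStar_smul_left, X_one_mul_wickStar, pderiv_zero_wickStar,
    smul_add]
  abel

theorem leftAssoc (f : MvPolynomial (Fin 2) ℂ) : LeftAssoc ℏ f := by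
  induction f using MvPolynomial.induction_on with
  | C a => exact leftAssoc_of_pderiv_one_eq_zero pderiv_C
  | add p q hp hq => exact hp.add hq
  | mul_X p i hp =>
    match i with
    | 0 =>
      have hX : pderiv 1 (X 0 : MvPolynomial (Fin 2) ℂ) = 0 := pderiv_X_of_ne (by decide)
      rw [mul_comm, ← wickStar_of_pderiv_one_eq_zero ℏ hX]
      exact (leftAssoc_of_pderiv_one_eq_zero hX).wickStar hp
    | 1 =>
      have hX : pderiv 0 (X 1 : MvPolynomial (Fin 2) ℂ) = 0 := pderiv_X_of_ne (by decide)
      rw [← wickStar_of_pderiv_zero_eq_zero ℏ p hX]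
      exact hp.wickStar leftAssoc_X_one

end WickStar

/-- The Wick star product is associative with unit `1`. -/
theorem wickStar_assoc_and_unital (ℏ : ℂ) :
    (∀ f g h : MvPolynomial (Fin 2) ℂ,
      wickStar ℏ (wickStar ℏ f g) h = wickStar ℏ f (wickStar ℏ g h)) ∧
    (∀ f : MvPolynomial (Fin 2) ℂ, wickStar ℏ f 1 = f ∧ wickStar ℏ 1 f = f) :=
  ⟨WickStar.leftAssoc, fun f => ⟨WickStar.wickStar_one ℏ f, WickStar.one_wickStar ℏ f⟩⟩
end
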